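/- Let r ≥ 1 be an integer, G = (V,E) a finite simple graph, and U ⊆ E. Then there exists an inclusion-minimal r-edge cover X of G with U ⊆ X if and only if there exists an r-edge cover E' of G with U ⊆ E' ⊆ E such that the set S = {v ∈ V : v is an endpoint of some edge of U and v is incident to strictly more than r edges of E'} is an independent set of the graph (V, U), i.e., no edge of U has both of its endpoints in S. -/

import Mathlib

/-- `X` is an `r`-edge cover (of a graph on vertex type `V`): every vertex is incident
to at least `r` edges of `X`. -/
def IsRECover {V : Type*} (r : ℕ) (X : Set (Sym2 V)) : Prop :=
  ∀ v : V, r ≤ ({e ∈ X | v ∈ e}).ncard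

/-!
Among the covers `X` with `U ⊆ X ⊆ E'` take an inclusion-minimal one. It can fail to be a minimal
`r`-edge cover only if some edge `e ∈ X` is removable, i.e. both endpoints of `e` have degree
`> r` in `X`. Such an edge lies in `U` by the choice of `X`, and its endpoints have degree `> r`
in `E' ⊇ X` as well, which is excluded by the independence hypothesis. Conversely, a minimal
cover `X ⊇ U` has no removable edge, so `E' = X` works.
-/

section EdgeCover

variable {V : Type*} {r : ℕ}

lemma sep_mem_sdiff_singleton (X : Set (Sym2 V)) (e : Sym2 V) (v : V) :
    {g ∈ X \ {e} | v ∈ g} = {g ∈ X | v ∈ g} \ {e} := by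
  ext g
  simp only [Set.mem_ofPred_eq, Set.mem_sdiff]
  tauto

lemma ncard_sep_mem_le_of_subset [Finite V] {X Y : Set (Sym2 V)} (hXY : X ⊆ Y) (v : V) :
    ({g ∈ X | v ∈ g}).ncard ≤ ({g ∈ Y | v ∈ g}).ncard :=
  Set.ncard_le_ncard (fun _ hg => ⟨hXY hg.1, hg.2⟩)

lemma IsRECover.mono [Finite V] {X Y : Set (Sym2 V)} (hX : IsRECover r X) (hXY : X ⊆ Y) :
    IsRECover r Y :=
  fun v => (hX v).trans (ncard_sep_mem_le_of_subset hXY v)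

lemma IsRECover.sdiff_singleton_iff [Finite V] {X : Set (Sym2 V)} (hX : IsRECover r X)
    {e : Sym2 V} (he : e ∈ X) :
    IsRECover r (X \ {e}) ↔ ∀ v ∈ e, r < ({g ∈ X | v ∈ g}).ncard := by
  have hdrop : ∀ v ∈ e, ({g ∈ X \ {e} | v ∈ g}).ncard + 1 = ({g ∈ X | v ∈ g}).ncard :=
    fun v hv => sep_mem_sdiff_singleton X e v ▸ Set.ncard_sdiff_singleton_add_one ⟨he, hv⟩
  constructor
  · intro h v hv
    have := h v
    have := hdrop v hv
    omega
  · intro h v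
    by_cases hv : v ∈ e
    · have := h v hv
      have := hdrop v hv
      omega
    · rw [sep_mem_sdiff_singleton, Set.sdiff_singleton_eq_self fun hmem => hv hmem.2]
      exact hX v

lemma minimal_isRECover_iff [Finite V] {X : Set (Sym2 V)} :
    Minimal (IsRECover r) X ↔ IsRECover r X ∧ ∀ e ∈ X, ¬ IsRECover r (X \ {e}) :=
  Set.minimal_iff_forall_sdiff_singleton fun _ _ hX hXY => hX.mono hXY

end EdgeCover

theorem stmt_5 {V : Type*} [Fintype V] (r : ℕ)
    (G : SimpleGraph V) (U : Set (Sym2 V)) :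
    (∃ X : Set (Sym2 V), U ⊆ X ∧ X ⊆ G.edgeSet ∧ IsRECover r X ∧
        ∀ Y ⊂ X, ¬ IsRECover r Y) ↔
      (∃ E' : Set (Sym2 V), U ⊆ E' ∧ E' ⊆ G.edgeSet ∧ IsRECover r E' ∧
        ∀ e ∈ U, ¬ ∀ v ∈ e,
          v ∈ {u : V | (∃ f ∈ U, u ∈ f) ∧ r < ({g ∈ E' | u ∈ g}).ncard}) := by
  simp only [← Set.minimal_iff_forall_ssubset]
  constructor
  · rintro ⟨X, hUX, hXG, hXmin⟩
    refine ⟨X, hUX, hXG, hXmin.prop, fun e he hS => ?_⟩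
    exact (minimal_isRECover_iff.1 hXmin).2 e (hUX he)
      ((hXmin.prop.sdiff_singleton_iff (hUX he)).2 fun v hv => (hS v hv).2)
  · rintro ⟨E', hUE, hE'G, hE', hS⟩
    obtain ⟨X, hXmin⟩ := exists_minimal_of_wellFoundedLT
      (fun X => U ⊆ X ∧ X ⊆ E' ∧ IsRECover r X) ⟨E', hUE, subset_rfl, hE'⟩
    obtain ⟨hUX, hXE', hX⟩ := hXmin.prop
    refine ⟨X, hUX, hXE'.trans hE'G, minimal_isRECover_iff.2 ⟨hX, fun e he hXe => ?_⟩⟩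
    by_cases heU : e ∈ U
    · refine hS e heU fun v hv => ⟨⟨e, heU, hv⟩, ?_⟩
      exact ((hX.sdiff_singleton_iff he).1 hXe v hv).trans_le (ncard_sep_mem_le_of_subset hXE' v)
    · have hUXe : U ⊆ X \ {e} := fun f hf => ⟨hUX hf, fun hfe => heU (hfe ▸ hf)⟩
      exact hXmin.notMem_of_prop_sdiff_singleton ⟨hUXe, Set.sdiff_subset.trans hXE', hXe⟩ he
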